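/- Let W be a nonzero minimal closed max cone in (ℝ≥0)ⁿ invariant under max-times multiplication by A ∈ (ℝ≥0)^{n×n}, and assume A^{⊗t} ⊗ v ≠ 0 for every nonzero v ∈ W and every t ≥ 1. Then for each fixed t ≥ 1, the quantity [v : A^{⊗t} ⊗ v] is the same for all nonzero v ∈ W. -/
import Mathlib

set_option synthInstance.maxHeartbeats 1000000
set_option maxHeartbeats 1000000

open scoped NNReal

def MaxCone {n : ℕ} (W : Set (Fin n → ℝ≥0)) : Prop :=
  (0 : Fin n → ℝ≥0) ∈ W ∧
  (∀ x ∈ W, ∀ y ∈ W, x ⊔ y ∈ W) ∧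
  (∀ r : ℝ≥0, ∀ x ∈ W, r • x ∈ W)

def maxMul {n : ℕ} (A : Matrix (Fin n) (Fin n) ℝ≥0) (v : Fin n → ℝ≥0) : Fin n → ℝ≥0 :=
  fun i => Finset.univ.sup fun j => A i j * v j

def maxMatMul {n : ℕ} (A B : Matrix (Fin n) (Fin n) ℝ≥0) : Matrix (Fin n) (Fin n) ℝ≥0 :=
  fun i j => Finset.univ.sup fun k => A i k * B k j

def maxPow {n : ℕ} (A : Matrix (Fin n) (Fin n) ℝ≥0) : ℕ → Matrix (Fin n) (Fin n) ℝ≥0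
  | 0 => 1
  | (t + 1) => maxMatMul A (maxPow A t)

noncomputable def bracket {n : ℕ} (v w : Fin n → ℝ≥0) : ℝ≥0 :=
  sSup {l : ℝ≥0 | l • w ≤ v}

lemma maxMul_mono {n : ℕ} (A : Matrix (Fin n) (Fin n) ℝ≥0) {v w : Fin n → ℝ≥0}
    (h : v ≤ w) : maxMul A v ≤ maxMul A w := by
  intro i
  exact Finset.sup_mono_fun fun j _ => mul_le_mul_right (h j) _

lemma maxMul_zero {n : ℕ} (A : Matrix (Fin n) (Fin n) ℝ≥0) : maxMul A 0 = 0 := by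
  funext i; simp [maxMul]

lemma maxMul_smul {n : ℕ} (A : Matrix (Fin n) (Fin n) ℝ≥0) (r : ℝ≥0) (v : Fin n → ℝ≥0) :
    maxMul A (r • v) = r • maxMul A v := by
  funext i
  simp only [maxMul, Pi.smul_apply, smul_eq_mul, NNReal.mul_finset_sup]
  congr 1; funext j; ring

lemma maxMul_sup {n : ℕ} (A : Matrix (Fin n) (Fin n) ℝ≥0) (x y : Fin n → ℝ≥0) :
    maxMul A (x ⊔ y) = maxMul A x ⊔ maxMul A y := by
  funext i
  simp only [maxMul, Pi.sup_apply]
  rw [← Finset.sup_sup]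
  congr 1; funext j
  exact mul_max (A i j) (x j) (y j)

lemma maxMul_maxMatMul {n : ℕ} (A B : Matrix (Fin n) (Fin n) ℝ≥0) (v : Fin n → ℝ≥0) :
    maxMul (maxMatMul A B) v = maxMul A (maxMul B v) := by
  funext i
  simp only [maxMul, maxMatMul]
  apply le_antisymm
  · apply Finset.sup_le
    intro j _
    rw [NNReal.finset_sup_mul]
    apply Finset.sup_le
    intro k _
    refine le_trans ?_ (Finset.le_sup (Finset.mem_univ k))
    rw [mul_assoc]
    exact mul_le_mul_right (Finset.le_sup (f := fun j' => B k j' * v j') (Finset.mem_univ j)) _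
  · apply Finset.sup_le
    intro k _
    rw [NNReal.mul_finset_sup]
    apply Finset.sup_le
    intro j _
    refine le_trans ?_ (Finset.le_sup (Finset.mem_univ j))
    rw [NNReal.finset_sup_mul]
    refine le_trans ?_ (Finset.le_sup (Finset.mem_univ k))
    rw [mul_assoc]

lemma maxMul_one {n : ℕ} (v : Fin n → ℝ≥0) : maxMul 1 v = v := by
  funext i
  simp only [maxMul, Matrix.one_apply]
  apply le_antisymm
  · apply Finset.sup_le
    intro j _
    by_cases h : i = j <;> simp [h]
  · refine le_trans ?_ (Finset.le_sup (Finset.mem_univ i))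
    simp

lemma maxPow_comm {n : ℕ} (A : Matrix (Fin n) (Fin n) ℝ≥0) (t : ℕ) (v : Fin n → ℝ≥0) :
    maxMul (maxPow A t) (maxMul A v) = maxMul A (maxMul (maxPow A t) v) := by
  induction t with
  | zero => rw [maxPow, maxMul_one, maxMul_one]
  | succ t ih =>
      rw [maxPow, maxMul_maxMatMul, maxMul_maxMatMul, ih]

lemma bracket_bddAbove {n : ℕ} {v w : Fin n → ℝ≥0} (hw : w ≠ 0) :
    BddAbove {l : ℝ≥0 | l • w ≤ v} := by
  obtain ⟨i, hi⟩ : ∃ i, w i ≠ 0 := by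
    by_contra h
    push_neg at h
    exact hw (funext fun i => h i)
  refine ⟨v i / w i, fun l hl => ?_⟩
  rw [le_div_iff₀ hi.bot_lt]
  exact hl i

lemma le_bracket {n : ℕ} {v w : Fin n → ℝ≥0} (hw : w ≠ 0) {l : ℝ≥0} (hl : l • w ≤ v) :
    l ≤ bracket v w :=
  le_csSup (bracket_bddAbove hw) hl

lemma bracket_spec {n : ℕ} {v w : Fin n → ℝ≥0} (hw : w ≠ 0) :
    bracket v w • w ≤ v := by
  have hclosed : IsClosed {l : ℝ≥0 | l • w ≤ v} := by
    have : {l : ℝ≥0 | l • w ≤ v} = ⋂ i, {l : ℝ≥0 | l * w i ≤ v i} := by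
      ext l; simp [Pi.le_def, Set.mem_iInter]
    rw [this]
    exact isClosed_iInter fun i =>
      isClosed_le (by continuity) continuous_const
  exact hclosed.csSup_mem ⟨0, by simp⟩ (bracket_bddAbove hw)

theorem stmt9 {n : ℕ} (A : Matrix (Fin n) (Fin n) ℝ≥0) (W : Set (Fin n → ℝ≥0))
    (hW : MaxCone W) (hcl : IsClosed W) (hnz : ∃ w ∈ W, w ≠ 0)
    (hinv : ∀ v ∈ W, maxMul A v ∈ W)
    (hmin : ∀ W' : Set (Fin n → ℝ≥0), MaxCone W' → IsClosed W' →
      (∃ w ∈ W', w ≠ 0) → (∀ v ∈ W', maxMul A v ∈ W') → W' ⊆ W → W' = W)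
    (hpow : ∀ v ∈ W, v ≠ 0 → ∀ t : ℕ, 1 ≤ t → maxMul (maxPow A t) v ≠ 0) :
    ∀ t : ℕ, 1 ≤ t → ∀ v ∈ W, v ≠ 0 → ∀ u ∈ W, u ≠ 0 →
      bracket v (maxMul (maxPow A t) v) = bracket u (maxMul (maxPow A t) u) := by
  intro t ht
  have key : ∀ v ∈ W, v ≠ 0 → ∀ u ∈ W, u ≠ 0 →
      bracket v (maxMul (maxPow A t) v) ≤ bracket u (maxMul (maxPow A t) u) := by
    intro v hv hvne u hu hune
    set B := maxPow A t with hB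
    set l := bracket v (maxMul B v) with hl
    set W' : Set (Fin n → ℝ≥0) := {w | w ∈ W ∧ l • maxMul B w ≤ w} with hW'
    have hScl : IsClosed {w : Fin n → ℝ≥0 | l • maxMul B w ≤ w} := by
      have heq : {w : Fin n → ℝ≥0 | l • maxMul B w ≤ w}
          = ⋂ i, ⋂ j, {w : Fin n → ℝ≥0 | l * (B i j * w j) ≤ w i} := by
        ext w
        simp only [Set.mem_setOf_eq, Set.mem_iInter, Pi.le_def, Pi.smul_apply, smul_eq_mul,
          maxMul, NNReal.mul_finset_sup, Finset.sup_le_iff, Finset.mem_univ, forall_true_left]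
      rw [heq]
      exact isClosed_iInter fun i => isClosed_iInter fun j =>
        isClosed_le (continuous_const.mul (continuous_const.mul (continuous_apply j)))
          (continuous_apply i)
    have hWeq : W' = W := by
      apply hmin
      · refine ⟨⟨hW.1, ?_⟩, ?_, ?_⟩
        · rw [maxMul_zero]; simp
        · rintro x ⟨hxW, hx⟩ y ⟨hyW, hy⟩
          refine ⟨hW.2.1 x hxW y hyW, ?_⟩
          rw [maxMul_sup]
          have : l • (maxMul B x ⊔ maxMul B y) = l • maxMul B x ⊔ l • maxMul B y := by
            funext i
            simp only [Pi.smul_apply, Pi.sup_apply, smul_eq_mul]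
            exact mul_max _ _ _
          rw [this]
          exact sup_le_sup hx hy
        · rintro r x ⟨hxW, hx⟩
          refine ⟨hW.2.2 r x hxW, ?_⟩
          rw [maxMul_smul, smul_comm]
          intro i
          exact mul_le_mul_right (hx i) r
      · exact hcl.inter hScl
      · exact ⟨v, ⟨hv, bracket_spec (hpow v hv hvne t ht)⟩, hvne⟩
      · rintro w ⟨hwW, hw⟩
        refine ⟨hinv w hwW, ?_⟩
        rw [hB, maxPow_comm, ← maxMul_smul]
        exact maxMul_mono A hw
      · exact fun w hw => hw.1
    have hu' : u ∈ W' := hWeq ▸ hu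
    exact le_bracket (hpow u hu hune t ht) hu'.2
  intro v hv hvne u hu hune
  exact le_antisymm (key v hv hvne u hu hune) (key u hu hune v hv hvne)
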